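/- arXiv:math/9302207 — 2 statements merged into one kernel-verified Lean document; each statement's English description precedes it below -/
import Mathlib

section
/- (Jameson's lemma.) Let 1 ≤ q < p ≤ ∞ and let T : X → Y be an absolutely q-summing bounded linear operator between real Banach spaces with π_{p,q}(T) > 0. Then there exists a natural number n with n ≤ (2^{1/p} · π_q(T)/π_{p,q}(T))^{1/(1/q − 1/p)} such that π_{p,q}(T) ≤ 2^{1/p} · π_{p,q}^n(T). -/
open scoped ENNReal NNReal BigOperators

noncomputable section

/-- The `ℓ_p`-sum `(∑ i, f i ^ p) ^ (1/p)` of a finite family in `ℝ≥0∞`,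
with the usual sup-modification for `p = ∞`. -/
def eSum (p : ℝ≥0∞) {ι : Type*} [Fintype ι] (f : ι → ℝ≥0∞) : ℝ≥0∞ :=
  if p = ∞ then ⨆ i, f i else (∑ i, f i ^ p.toReal) ^ (1 / p.toReal)

/-- The weak `ℓ_q`-norm of a finite family of vectors:
`sup { (∑ k |⟨x_k, x*⟩|^q)^(1/q) : x* in the unit ball of the dual }`. -/
def weakLq (q : ℝ≥0∞) {X : Type*} [NormedAddCommGroup X] [NormedSpace ℝ X]
    {n : ℕ} (x : Fin n → X) : ℝ≥0∞ :=
  ⨆ f : {f : X →L[ℝ] ℝ // ‖f‖ ≤ 1}, eSum q fun k => ENNReal.ofReal |f.1 (x k)|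

/-- The `(p,q)`-summing norm of `T` with respect to `n` vectors. -/
def piN (p q : ℝ≥0∞) {X Y : Type*} [NormedAddCommGroup X] [NormedSpace ℝ X]
    [NormedAddCommGroup Y] [NormedSpace ℝ Y] (n : ℕ) (T : X →L[ℝ] Y) : ℝ≥0∞ :=
  ⨆ x : {x : Fin n → X // weakLq q x ≤ 1}, eSum p fun k => ENNReal.ofReal ‖T (x.1 k)‖

/-- The `(p,q)`-summing norm of `T`. -/
def piPQ (p q : ℝ≥0∞) {X Y : Type*} [NormedAddCommGroup X] [NormedSpace ℝ X]
    [NormedAddCommGroup Y] [NormedSpace ℝ Y] (T : X →L[ℝ] Y) : ℝ≥0∞ :=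
  ⨆ n : ℕ, piN p q n T

/-- `T` has rank at most `n`: its range is a finite-dimensional subspace of
dimension at most `n`. -/
def RankLE {X Y : Type*} [NormedAddCommGroup X] [NormedSpace ℝ X]
    [NormedAddCommGroup Y] [NormedSpace ℝ Y] (T : X →L[ℝ] Y) (n : ℕ) : Prop :=
  FiniteDimensional ℝ (LinearMap.range (T : X →ₗ[ℝ] Y)) ∧
    Module.finrank ℝ (LinearMap.range (T : X →ₗ[ℝ] Y)) ≤ n

/-- The average of `‖∑ k, ε k • x k‖²` over all `2^n` sign choices `ε ∈ {-1,1}^n`. -/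
def radAvg {X : Type*} [NormedAddCommGroup X] [NormedSpace ℝ X] {n : ℕ}
    (x : Fin n → X) : ℝ :=
  (∑ ε : Fin n → Bool, ‖∑ k, (if ε k then (1 : ℝ) else -1) • x k‖ ^ 2) / 2 ^ n

/-- The Rademacher cotype `q` constant of `T` with respect to `n` vectors. -/
def cotypeN (q : ℝ) {X Y : Type*} [NormedAddCommGroup X] [NormedSpace ℝ X]
    [NormedAddCommGroup Y] [NormedSpace ℝ Y] (n : ℕ) (T : X →L[ℝ] Y) : ℝ≥0∞ :=
  ⨆ x : {x : Fin n → X // Real.sqrt (radAvg x) ≤ 1},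
    (∑ k, ENNReal.ofReal ‖T (x.1 k)‖ ^ q) ^ (1 / q)

/-- The Rademacher cotype `q` constant of `T`. -/
def cotype (q : ℝ) {X Y : Type*} [NormedAddCommGroup X] [NormedSpace ℝ X]
    [NormedAddCommGroup Y] [NormedSpace ℝ Y] (T : X →L[ℝ] Y) : ℝ≥0∞ :=
  ⨆ n : ℕ, cotypeN q n T

/-! Fix vectors `x_1, …, x_N` of weak `ℓ_q` norm at most one and put `s_k = ‖T x_k‖`, so that
`∑ s_k^q ≤ π_q(T)^q`. At most `n` indices satisfy `s_k^q > c := π_q(T)^q / (n + 1)`; these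
contribute at most `π^n_{p,q}(T)^p` to `∑ s_k^p`, and the remaining ones at most
`π_q(T)^q c^{(p-q)/q}` because `s_k^p ≤ s_k^q c^{(p-q)/q}` for them. Once `n + 1` exceeds
`(2^{1/p} π_q(T)/π_{p,q}(T))^{1/(1/q-1/p)}` the second contribution is at most
`π_{p,q}(T)^p / 2`, and since `π_{p,q}(T) ≤ π_q(T)` is finite this can be absorbed on the left.
For `p = ∞` one vector already attains `π_{∞,q}(T)`. -/

open Finset Function

namespace ENNReal

theorem rpow_le_rpow_mul_of_rpow_le {x c : ℝ≥0∞} {a b : ℝ} (ha : 0 < a) (hab : a ≤ b)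
    (hx : x ^ a ≤ c) : x ^ b ≤ x ^ a * c ^ ((b - a) / a) := by
  have hr : 0 ≤ (b - a) / a := div_nonneg (sub_nonneg.mpr hab) ha.le
  calc x ^ b = x ^ a * (x ^ a) ^ ((b - a) / a) := by
        rw [← rpow_mul, ← rpow_add_of_nonneg _ _ ha.le (by positivity)]
        congr 1; field_simp; ring
    _ ≤ x ^ a * c ^ ((b - a) / a) := by gcongr

theorem sum_rpow_le_mul_rpow_of_rpow_le {ι : Type*} (s : Finset ι) {f : ι → ℝ≥0∞} {a b : ℝ}
    (ha : 0 < a) (hab : a ≤ b) {c S : ℝ≥0∞} (hc : ∀ i ∈ s, f i ^ a ≤ c)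
    (hS : ∑ i ∈ s, f i ^ a ≤ S) : ∑ i ∈ s, f i ^ b ≤ S * c ^ ((b - a) / a) :=
  calc ∑ i ∈ s, f i ^ b ≤ ∑ i ∈ s, f i ^ a * c ^ ((b - a) / a) :=
        sum_le_sum fun i hi => rpow_le_rpow_mul_of_rpow_le ha hab (hc i hi)
    _ = (∑ i ∈ s, f i ^ a) * c ^ ((b - a) / a) := (sum_mul ..).symm
    _ ≤ S * c ^ ((b - a) / a) := by gcongr

theorem sum_rpow_rpow_le_of_le {ι : Type*} (s : Finset ι) (f : ι → ℝ≥0∞) {a b : ℝ}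
    (ha : 0 < a) (hab : a ≤ b) :
    (∑ i ∈ s, f i ^ b) ^ (1 / b) ≤ (∑ i ∈ s, f i ^ a) ^ (1 / a) := by
  set S := ∑ i ∈ s, f i ^ a
  have hsum : ∑ i ∈ s, f i ^ b ≤ S ^ (b / a) :=
    calc ∑ i ∈ s, f i ^ b ≤ S * S ^ ((b - a) / a) :=
          sum_rpow_le_mul_rpow_of_rpow_le s ha hab
            (fun i hi => single_le_sum (f := fun j => f j ^ a) (fun j _ => zero_le) hi) le_rfl
      _ = S ^ (1 : ℝ) * S ^ ((b - a) / a) := by rw [rpow_one]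
      _ = S ^ (b / a) := by
          rw [← rpow_add_of_nonneg _ _ zero_le_one (by positivity [sub_nonneg.mpr hab])]
          congr 1; field_simp; ring
  have hb : 0 < b := ha.trans_le hab
  calc (∑ i ∈ s, f i ^ b) ^ (1 / b) ≤ (S ^ (b / a)) ^ (1 / b) := by gcongr
    _ = S ^ (1 / a) := by
        rw [← rpow_mul]; congr 1; field_simp

theorem card_filter_lt_le_of_sum_le {ι : Type*} (s : Finset ι) {g : ι → ℝ≥0∞} {c : ℝ≥0∞}
    {n : ℕ} (h : ∑ i ∈ s, g i ≤ (n + 1) * c) : #{i ∈ s | c < g i} ≤ n := by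
  by_contra! hn
  set F := {i ∈ s | c < g i}
  have hF : ∑ i ∈ F, g i ≤ ∑ i ∈ F, c :=
    calc ∑ i ∈ F, g i ≤ ∑ i ∈ s, g i := sum_le_sum_of_subset (filter_subset _ _)
      _ ≤ (n + 1) * c := h
      _ ≤ #F * c := by gcongr; exact_mod_cast hn
      _ = ∑ i ∈ F, c := by rw [sum_const, nsmul_eq_mul]
  obtain ⟨i, hi, hle⟩ := exists_le_of_sum_le (card_pos.mp (by omega)) hF
  exact (mem_filter.mp hi).2.not_ge hle

theorem exists_natCast_le_le_add_one {B : ℝ≥0∞} (hB : B ≠ ∞) :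
    ∃ n : ℕ, (n : ℝ≥0∞) ≤ B ∧ B ≤ n + 1 := by
  lift B to ℝ≥0 using hB
  refine ⟨⌊B⌋₊, ?_, ?_⟩
  · exact_mod_cast Nat.floor_le B.2
  · exact_mod_cast (Nat.lt_floor_add_one B).le

theorem le_two_rpow_mul_of_rpow_le_add_half {x y : ℝ≥0∞} {P : ℝ} (hP : 0 < P) (hx : x ≠ ∞)
    (h : x ^ P ≤ y ^ P + x ^ P / 2) : x ≤ 2 ^ (1 / P) * y := by
  have hhalf : x ^ P / 2 ≤ y ^ P := by
    rw [← ENNReal.sub_half (rpow_ne_top_of_nonneg hP.le hx)]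
    exact tsub_le_iff_right.mpr h
  rw [ENNReal.div_le_iff two_ne_zero ofNat_ne_top] at hhalf
  refine (rpow_le_rpow_iff hP).mp ?_
  rwa [mul_rpow_of_nonneg _ _ hP.le, one_div, rpow_inv_rpow hP.ne', mul_comm]

theorem rpow_mul_div_rpow_le_half {Q P : ℝ} (hQ : 0 < Q) (hQP : Q < P) {C π N : ℝ≥0∞}
    (hπ0 : π ≠ 0) (hπ : π ≠ ∞) (hN : (2 ^ (1 / P) * C / π) ^ (1 / (1 / Q - 1 / P)) ≤ N) :
    C ^ Q * (C ^ Q / N) ^ ((P - Q) / Q) ≤ π ^ P / 2 := by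
  set r := (P - Q) / Q
  have hP : 0 < P := hQ.trans hQP
  have hr : 0 < r := div_pos (sub_pos.mpr hQP) hQ
  have hπP0 : π ^ P ≠ 0 := (rpow_pos (pos_iff_ne_zero.mpr hπ0) hπ).ne'
  have hπP : π ^ P ≠ ∞ := rpow_ne_top_of_nonneg hP.le hπ
  have hPQ : P - Q ≠ 0 := (sub_pos.mpr hQP).ne'
  have hexp : 1 / (1 / Q - 1 / P) * r = P := by
    simp only [r]; field_simp
  have hratio : 2 * C ^ P / π ^ P ≤ N ^ r :=
    calc 2 * C ^ P / π ^ P = ((2 ^ (1 / P) * C / π) ^ (1 / (1 / Q - 1 / P))) ^ r := by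
          rw [← rpow_mul, hexp, div_rpow_of_nonneg _ _ hP.le, mul_rpow_of_nonneg _ _ hP.le,
            one_div P, rpow_inv_rpow hP.ne']
      _ ≤ N ^ r := by gcongr
  have hsplit : C ^ Q * (C ^ Q / N) ^ r = C ^ P / N ^ r := by
    rw [div_rpow_of_nonneg _ _ hr.le, ← rpow_mul, ← mul_div_assoc,
      ← rpow_add_of_nonneg _ _ hQ.le (by positivity)]
    congr 2
    simp only [r]; field_simp; ring
  rw [hsplit]
  refine div_le_of_le_mul ?_
  rw [ENNReal.div_le_iff hπP0 hπP] at hratio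
  rwa [mul_comm, ← mul_div_assoc,
    ENNReal.le_div_iff_mul_le (Or.inl two_ne_zero) (Or.inl ofNat_ne_top), mul_comm]

end ENNReal

theorem eSum_comp_le {p : ℝ≥0∞} {ι κ : Type*} [Fintype ι] [Fintype κ] (f : κ → ℝ≥0∞)
    {e : ι → κ} (he : Injective e) : eSum p (f ∘ e) ≤ eSum p f := by
  unfold eSum
  split_ifs
  · exact iSup_comp_le f e
  · gcongr
    exact le_of_eq_of_le (sum_map univ ⟨e, he⟩ fun k => f k ^ p.toReal).symm
      (sum_le_sum_of_subset (subset_univ _))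

theorem eSum_comp_append_zero {r : ℝ≥0∞} (hr : r ≠ 0) {α : Type*} [Zero α] {g : α → ℝ≥0∞}
    (hg : g 0 = 0) {m k : ℕ} (z : Fin m → α) :
    eSum r (fun j => g (Fin.append z (0 : Fin k → α) j)) = eSum r (g ∘ z) := by
  unfold eSum
  split_ifs with hr'
  · refine le_antisymm (iSup_le fun j => ?_) (iSup_le fun i => le_iSup_of_le (Fin.castAdd k i) ?_)
    · refine Fin.addCases (fun i => ?_) (fun i => ?_) j
      · simpa using le_iSup (fun i => g (z i)) i
      · simp [hg]
    · simp
  · simp [Fin.sum_univ_add, hg, ENNReal.zero_rpow_of_pos (ENNReal.toReal_pos hr hr')]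

theorem eSum_le_eSum_of_le {p q : ℝ≥0∞} (hq : q ≠ 0) (hqp : q ≤ p) {ι : Type*} [Fintype ι]
    (f : ι → ℝ≥0∞) : eSum p f ≤ eSum q f := by
  rcases eq_or_ne q ∞ with rfl | hq'
  · rw [top_le_iff.mp hqp]
  have hQ : 0 < q.toReal := ENNReal.toReal_pos hq hq'
  unfold eSum
  rw [if_neg hq']
  split_ifs with hp
  · refine iSup_le fun i => ?_
    calc f i = (f i ^ q.toReal) ^ (1 / q.toReal) := by rw [one_div, ENNReal.rpow_rpow_inv hQ.ne']
      _ ≤ (∑ j, f j ^ q.toReal) ^ (1 / q.toReal) := by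
          gcongr
          exact single_le_sum (f := fun j => f j ^ q.toReal) (fun j _ => zero_le) (mem_univ i)
  · exact ENNReal.sum_rpow_rpow_le_of_le _ f hQ (ENNReal.toReal_mono hp hqp)

section Summing

variable {X Y : Type*} [NormedAddCommGroup X] [NormedSpace ℝ X]
  [NormedAddCommGroup Y] [NormedSpace ℝ Y]

theorem weakLq_comp_le (q : ℝ≥0∞) {m N : ℕ} (x : Fin N → X) {e : Fin m → Fin N}
    (he : Injective e) : weakLq q (x ∘ e) ≤ weakLq q x :=
  iSup_mono fun f => eSum_comp_le (fun k => ENNReal.ofReal |f.1 (x k)|) he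

theorem piPQ_le_piPQ_of_le {p q : ℝ≥0∞} (hq : q ≠ 0) (hqp : q ≤ p) (T : X →L[ℝ] Y) :
    piPQ p q T ≤ piPQ q q T :=
  iSup_mono fun _ => iSup_mono fun _ => eSum_le_eSum_of_le hq hqp _

theorem piN_mono {p q : ℝ≥0∞} (hp : p ≠ 0) (hq : q ≠ 0) (T : X →L[ℝ] Y) :
    Monotone fun n => piN p q n T := by
  intro m n hmn
  obtain ⟨k, rfl⟩ := Nat.exists_eq_add_of_le hmn
  refine iSup_le fun z => le_iSup_of_le ⟨Fin.append z.1 0, ?_⟩ ?_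
  · refine le_of_eq_of_le (iSup_congr fun f => ?_) z.2
    exact eSum_comp_append_zero hq (g := fun v => ENNReal.ofReal |f.1 v|) (by simp) z.1
  · exact (eSum_comp_append_zero hp (g := fun v => ENNReal.ofReal ‖T v‖) (by simp) z.1).ge

theorem eSum_comp_le_piN {p q : ℝ≥0∞} (hp : p ≠ 0) (hq : q ≠ 0) (T : X →L[ℝ] Y) {m n N : ℕ}
    (hmn : m ≤ n) {x : Fin N → X} (hx : weakLq q x ≤ 1) {e : Fin m → Fin N}
    (he : Injective e) :
    eSum p (fun i => ENNReal.ofReal ‖T (x (e i))‖) ≤ piN p q n T :=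
  (le_iSup_of_le (⟨x ∘ e, (weakLq_comp_le q x he).trans hx⟩ : {z : Fin m → X // weakLq q z ≤ 1})
    le_rfl).trans (piN_mono hp hq T hmn)

theorem piPQ_top_le_piN_one {q : ℝ≥0∞} (hq : q ≠ 0) (T : X →L[ℝ] Y) :
    piPQ ∞ q T ≤ piN ∞ q 1 T := by
  refine iSup_le fun N => iSup_le fun x => ?_
  simp only [eSum, if_true]
  refine iSup_le fun k => ?_
  simpa [eSum] using eSum_comp_le_piN ENNReal.top_ne_zero hq T le_rfl x.2
    (e := fun _ : Fin 1 => k) (injective_of_subsingleton _)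

theorem sum_rpow_le_piN_rpow {p q : ℝ≥0∞} (hp : p ≠ 0) (hp' : p ≠ ∞) (hq : q ≠ 0)
    (T : X →L[ℝ] Y) {n N : ℕ} {x : Fin N → X} (hx : weakLq q x ≤ 1) {A : Finset (Fin N)}
    (hA : #A ≤ n) :
    ∑ k ∈ A, ENNReal.ofReal ‖T (x k)‖ ^ p.toReal ≤ piN p q n T ^ p.toReal := by
  have hP : 0 < p.toReal := ENNReal.toReal_pos hp hp'
  set e : Fin #A → Fin N := fun i => A.equivFin.symm i
  have he : Injective e := Subtype.val_injective.comp A.equivFin.symm.injective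
  have hsum : ∑ k ∈ A, ENNReal.ofReal ‖T (x k)‖ ^ p.toReal =
      eSum p (fun i => ENNReal.ofReal ‖T (x (e i))‖) ^ p.toReal := by
    rw [eSum, if_neg hp', one_div, ENNReal.rpow_inv_rpow hP.ne', ← sum_coe_sort A]
    exact (A.equivFin.symm.sum_comp fun k : A => ENNReal.ofReal ‖T (x k)‖ ^ p.toReal).symm
  rw [hsum]
  gcongr
  exact eSum_comp_le_piN hp hq T hA hx he

theorem sum_rpow_le_piPQ_rpow {q : ℝ≥0∞} (hq : q ≠ 0) (hq' : q ≠ ∞) (T : X →L[ℝ] Y) {N : ℕ}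
    {x : Fin N → X} (hx : weakLq q x ≤ 1) :
    ∑ k, ENNReal.ofReal ‖T (x k)‖ ^ q.toReal ≤ piPQ q q T ^ q.toReal := by
  rw [← ENNReal.rpow_inv_le_iff (ENNReal.toReal_pos hq hq'), ← one_div]
  have h : eSum q (fun k => ENNReal.ofReal ‖T (x k)‖) ≤ piPQ q q T :=
    le_iSup_of_le N (le_iSup_of_le ⟨x, hx⟩ le_rfl)
  rwa [eSum, if_neg hq'] at h

theorem piPQ_rpow_le_piN_rpow_add {p q : ℝ≥0∞} (hq : q ≠ 0) (hp : p ≠ ∞) (hqp : q < p)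
    (T : X →L[ℝ] Y) (n : ℕ) :
    piPQ p q T ^ p.toReal ≤ piN p q n T ^ p.toReal +
      piPQ q q T ^ q.toReal * (piPQ q q T ^ q.toReal / (n + 1)) ^
        ((p.toReal - q.toReal) / q.toReal) := by
  have hq' : q ≠ ∞ := hqp.ne_top
  have hQ : 0 < q.toReal := ENNReal.toReal_pos hq hq'
  have hQP : q.toReal < p.toReal := (ENNReal.toReal_lt_toReal hq' hp).mpr hqp
  rw [← ENNReal.le_rpow_inv_iff (hQ.trans hQP)]
  refine iSup_le fun N => iSup_le fun x => ?_
  rw [eSum, if_neg hp, one_div]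
  gcongr
  set s := fun k => ENNReal.ofReal ‖T (x.1 k)‖
  set c := piPQ q q T ^ q.toReal / (n + 1)
  have hsQ : ∑ k, s k ^ q.toReal ≤ (n + 1) * c := by
    rw [ENNReal.mul_div_cancel (by positivity) (by simp)]
    exact sum_rpow_le_piPQ_rpow hq hq' T x.2
  rw [← sum_filter_add_sum_filter_not univ (fun k => c < s k ^ q.toReal)]
  gcongr
  · exact sum_rpow_le_piN_rpow (hq.bot_lt.trans hqp).ne' hp hq T x.2
      (ENNReal.card_filter_lt_le_of_sum_le univ hsQ)
  · exact ENNReal.sum_rpow_le_mul_rpow_of_rpow_le _ hQ hQP.le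
      (fun k hk => not_lt.mp (mem_filter.mp hk).2)
      ((sum_le_sum_of_subset (filter_subset _ _)).trans (sum_rpow_le_piPQ_rpow hq hq' T x.2))

theorem exists_piN_of_ne_top {p q : ℝ≥0∞} (hq : q ≠ 0) (hqp : q < p) (hp : p ≠ ∞)
    (T : X →L[ℝ] Y) (hqsum : piPQ q q T < ∞) (hpos : 0 < piPQ p q T) :
    ∃ n : ℕ,
      (n : ℝ≥0∞) ≤ ((2 : ℝ≥0∞) ^ (1 / p.toReal) * piPQ q q T / piPQ p q T) ^
          (1 / (1 / q.toReal - 1 / p.toReal)) ∧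
      piPQ p q T ≤ (2 : ℝ≥0∞) ^ (1 / p.toReal) * piN p q n T := by
  have hQ : 0 < q.toReal := ENNReal.toReal_pos hq hqp.ne_top
  have hQP : q.toReal < p.toReal := (ENNReal.toReal_lt_toReal hqp.ne_top hp).mpr hqp
  have hπ : piPQ p q T ≠ ∞ := ((piPQ_le_piPQ_of_le hq hqp.le T).trans_lt hqsum).ne
  have hB : ((2 : ℝ≥0∞) ^ (1 / p.toReal) * piPQ q q T / piPQ p q T) ^
      (1 / (1 / q.toReal - 1 / p.toReal)) ≠ ∞ := by
    refine ENNReal.rpow_ne_top_of_nonneg ?_ (ENNReal.div_ne_top ?_ hpos.ne')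
    · simpa using one_div_le_one_div_of_le hQ hQP.le
    · exact ENNReal.mul_ne_top (by simp) hqsum.ne
  obtain ⟨n, hnB, hBn⟩ := ENNReal.exists_natCast_le_le_add_one hB
  refine ⟨n, hnB, ENNReal.le_two_rpow_mul_of_rpow_le_add_half (hQ.trans hQP) hπ ?_⟩
  exact (piPQ_rpow_le_piN_rpow_add hq hp hqp T n).trans
    (add_le_add_right (ENNReal.rpow_mul_div_rpow_le_half hQ hQP hpos.ne' hπ hBn) _)

end Summing

theorem statement6_general (q p : ℝ≥0∞) (hq : 1 ≤ q) (hqp : q < p)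
    (X Y : Type*) [NormedAddCommGroup X] [NormedSpace ℝ X]
    [NormedAddCommGroup Y] [NormedSpace ℝ Y]
    (T : X →L[ℝ] Y) (hqsum : piPQ q q T < ∞) (hpos : 0 < piPQ p q T) :
    ∃ n : ℕ,
      (n : ℝ≥0∞) ≤ ((2 : ℝ≥0∞) ^ (1 / p.toReal) * piPQ q q T / piPQ p q T) ^
          (1 / (1 / q.toReal - 1 / p.toReal)) ∧
      piPQ p q T ≤ (2 : ℝ≥0∞) ^ (1 / p.toReal) * piN p q n T := by
  have hq0 : q ≠ 0 := (zero_lt_one.trans_le hq).ne'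
  rcases eq_or_ne p ∞ with rfl | hp
  · refine ⟨1, ?_, by simpa using piPQ_top_le_piN_one hq0 T⟩
    have hπ : piPQ ∞ q T ≤ piPQ q q T := piPQ_le_piPQ_of_le hq0 le_top T
    simp only [ENNReal.toReal_top, div_zero, ENNReal.rpow_zero, one_mul, sub_zero,
      one_div_one_div, Nat.cast_one]
    refine ENNReal.one_le_rpow ?_ (ENNReal.toReal_pos hq0 hqp.ne_top)
    rwa [ENNReal.le_div_iff_mul_le (Or.inl hpos.ne') (Or.inr hqsum.ne), one_mul]
  · exact exists_piN_of_ne_top hq0 hqp hp T hqsum hpos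

/-- Jameson's lemma: for `1 ≤ q < p ≤ ∞` and an absolutely
`q`-summing operator `T` with `π_{p,q}(T) > 0`, there is
`n ≤ (2^{1/p} π_q(T)/π_{p,q}(T))^{1/(1/q - 1/p)}` with
`π_{p,q}(T) ≤ 2^{1/p} π_{p,q}^n(T)`. -/
theorem statement6 (q p : ℝ≥0∞) (hq : 1 ≤ q) (hqp : q < p)
    (X Y : Type*) [NormedAddCommGroup X] [NormedSpace ℝ X] [CompleteSpace X]
    [NormedAddCommGroup Y] [NormedSpace ℝ Y] [CompleteSpace Y]
    (T : X →L[ℝ] Y) (hqsum : piPQ q q T < ∞) (hpos : 0 < piPQ p q T) :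
    ∃ n : ℕ,
      (n : ℝ≥0∞) ≤ ((2 : ℝ≥0∞) ^ (1 / p.toReal) * piPQ q q T / piPQ p q T) ^
          (1 / (1 / q.toReal - 1 / p.toReal)) ∧
      piPQ p q T ≤ (2 : ℝ≥0∞) ^ (1 / p.toReal) * piN p q n T :=
  statement6_general q p hq hqp X Y T hqsum hpos
end
end

section
/- Let 0 < θ < 1, let 1 ≤ q ≤ 2 and 1 ≤ r ≤ 2 with 1/r = (1−θ)/q + θ/2, and let p ≥ q be defined by 1/p = 1/q − θ/2. Then for every n ∈ ℕ the canonical identity map ι : ℓ_{q'}^n → ℓ_r^n (where q' is the conjugate exponent of q) satisfies π_{p,q}(ι) ≤ n^{1/p}. -/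
open scoped ENNReal NNReal BigOperators

noncomputable section

/-!
Write the vectors as the rows `g k` of an `m × n` matrix. Weak `ℓ_q`-norm at most one of the
rows in `ℓ_{q'}` says that `a ↦ (⟪a, g k⟫)_k` is a contraction of `ℓ_q`. On unit vectors this
gives `∑ k, ‖g k‖_q ^ q ≤ n`. The adjoint contracts `ℓ_{q'}`; averaging over random signs
(Khintchine's inequality with constant one, as `q' ≥ 2`) turns this into a square-function
estimate, which for well-chosen weights yields `∑ k, ‖g k‖_2 ^ (2q/(2-q)) ≤ n` (for `q = 2`:
`‖g k‖_2 ≤ 1`). As `1/r = (1-θ)/q + θ/2`, Hölder's inequality bounds `‖g k‖_r ^ p` by a geometric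
mean of these two summands with weights adding up to one, so `∑ k, ‖g k‖_r ^ p ≤ n`.
-/

open Finset

lemma sum_rpow_mul_rpow_one_sub_le {ι : Type*} (s : Finset ι) {A B : ι → ℝ}
    (hA : ∀ i ∈ s, 0 ≤ A i) (hB : ∀ i ∈ s, 0 ≤ B i) {t : ℝ} (ht0 : 0 ≤ t) (ht1 : t ≤ 1) :
    ∑ i ∈ s, A i ^ t * B i ^ (1 - t) ≤ (∑ i ∈ s, A i) ^ t * (∑ i ∈ s, B i) ^ (1 - t) := by
  rcases ht0.eq_or_lt with rfl | ht0
  · simp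
  rcases ht1.eq_or_lt with rfl | ht1
  · simp
  have hconj : (1 / t).HolderConjugate (1 / (1 - t)) :=
    Real.holderConjugate_one_div ht0 (by linarith) (by ring)
  have H := Real.inner_le_Lp_mul_Lq_of_nonneg s hconj (f := fun i => A i ^ t)
    (g := fun i => B i ^ (1 - t)) (fun i hi => Real.rpow_nonneg (hA i hi) _)
    (fun i hi => Real.rpow_nonneg (hB i hi) _)
  have hpow : ∀ {x u : ℝ}, 0 ≤ x → u ≠ 0 → (x ^ u) ^ (1 / u) = x := fun hx hu => by
    rw [← Real.rpow_mul hx, mul_one_div_cancel hu, Real.rpow_one]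
  simpa only [one_div_one_div, sum_congr rfl fun i hi => hpow (hA i hi) ht0.ne',
    sum_congr rfl fun i hi => hpow (hB i hi) (sub_pos.2 ht1).ne'] using H

lemma sum_rpow_mul_rpow_one_sub_le_of_le {ι : Type*} (s : Finset ι) {A B : ι → ℝ}
    (hA : ∀ i ∈ s, 0 ≤ A i) (hB : ∀ i ∈ s, 0 ≤ B i) {t N : ℝ} (ht0 : 0 ≤ t) (ht1 : t ≤ 1)
    (hAN : ∑ i ∈ s, A i ≤ N) (hBN : ∑ i ∈ s, B i ≤ N) :
    ∑ i ∈ s, A i ^ t * B i ^ (1 - t) ≤ N := by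
  have hA0 : 0 ≤ ∑ i ∈ s, A i := sum_nonneg hA
  have hB0 : 0 ≤ ∑ i ∈ s, B i := sum_nonneg hB
  calc ∑ i ∈ s, A i ^ t * B i ^ (1 - t)
      ≤ (∑ i ∈ s, A i) ^ t * (∑ i ∈ s, B i) ^ (1 - t) :=
        sum_rpow_mul_rpow_one_sub_le s hA hB ht0 ht1
    _ ≤ N ^ t * N ^ (1 - t) := by have := hA0.trans hAN; gcongr
    _ = N := by
        rw [← Real.rpow_add' (hA0.trans hAN) (by norm_num), add_sub_cancel, Real.rpow_one]

lemma le_of_le_rpow_mul_rpow_one_sub {x y a : ℝ} (hx : 0 ≤ x) (hy : 0 ≤ y) (ha : 0 < a)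
    (h : x ≤ y ^ a * x ^ (1 - a)) : x ≤ y := by
  rcases hx.eq_or_lt with rfl | hx
  · exact hy
  have hsplit : x ^ a * x ^ (1 - a) = x := by
    rw [← Real.rpow_add hx, add_sub_cancel, Real.rpow_one]
  have : x ^ a ≤ y ^ a :=
    le_of_mul_le_mul_right (hsplit.trans_le h) (Real.rpow_pos_of_pos hx _)
  exact (Real.rpow_le_rpow_iff hx.le hy ha).1 this

lemma pos_of_one_div_eq_sub {θ q p : ℝ} (hθ1 : θ < 1) (hq0 : 0 < q) (hq2 : q ≤ 2)
    (hpθ : 1 / p = 1 / q - θ / 2) : 0 < p :=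
  one_div_pos.1 <| by rw [hpθ, sub_pos, lt_div_iff₀ hq0]; nlinarith

lemma sum_abs_rpow_rpow_one_div_le {ι : Type*} [Fintype ι] (x : ι → ℝ) {θ q r s : ℝ}
    (hq : 0 < q) (hs : 0 < s) (hθ0 : 0 ≤ θ) (hθ1 : θ ≤ 1)
    (hr : 1 / r = (1 - θ) / q + θ / s) :
    (∑ i, |x i| ^ r) ^ (1 / r) ≤
      (∑ i, |x i| ^ q) ^ ((1 - θ) / q) * (∑ i, |x i| ^ s) ^ (θ / s) := by
  have hr0 : 0 < r := by
    have : 0 < 1 / r := by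
      rw [hr]
      rcases hθ0.eq_or_lt with rfl | hθ
      · simpa using hq
      · positivity
    exact one_div_pos.1 this
  set t := (1 - θ) * r / q with ht
  have ht1 : 1 - t = θ * r / s := by
    simp only [t]; field_simp at hr ⊢; linear_combination hr
  have hexp : t * q + (1 - t) * s = r := by
    rw [ht1]; simp only [t]; field_simp; ring
  have hnn : ∀ u : ℝ, 0 ≤ ∑ i, |x i| ^ u := fun u =>
    sum_nonneg fun i _ => Real.rpow_nonneg (abs_nonneg _) _
  have hinterp : ∑ i, |x i| ^ r ≤ (∑ i, |x i| ^ q) ^ t * (∑ i, |x i| ^ s) ^ (1 - t) := by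
    refine le_of_eq_of_le (sum_congr rfl fun i _ => ?_)
      (sum_rpow_mul_rpow_one_sub_le univ (fun i _ => Real.rpow_nonneg (abs_nonneg (x i)) q)
        (fun i _ => Real.rpow_nonneg (abs_nonneg (x i)) s) (by positivity)
        (by rw [← sub_nonneg, ht1]; positivity))
    rw [← Real.rpow_mul (abs_nonneg _), ← Real.rpow_mul (abs_nonneg _), mul_comm q,
      mul_comm s, ← Real.rpow_add' (abs_nonneg _) (by rw [hexp]; exact hr0.ne'), hexp]
  calc (∑ i, |x i| ^ r) ^ (1 / r)
      ≤ ((∑ i, |x i| ^ q) ^ t * (∑ i, |x i| ^ s) ^ (1 - t)) ^ (1 / r) := by gcongr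
    _ = _ := by
        rw [Real.mul_rpow (Real.rpow_nonneg (hnn q) _) (Real.rpow_nonneg (hnn s) _),
          ← Real.rpow_mul (hnn q), ← Real.rpow_mul (hnn s), ht1]
        congr 2
        · rw [ht]; field_simp
        · field_simp

section Rademacher

def rademacher {κ : Type*} (k : κ) (ε : κ → Bool) : ℝ := if ε k then 1 else -1

lemma rademacher_mul_self {κ : Type*} (k : κ) (ε : κ → Bool) :
    rademacher k ε * rademacher k ε = 1 := by
  unfold rademacher; split_ifs <;> norm_num

lemma abs_rademacher {κ : Type*} (k : κ) (ε : κ → Bool) : |rademacher k ε| = 1 := by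
  unfold rademacher; split_ifs <;> norm_num

variable {κ : Type*} [Fintype κ] [DecidableEq κ]

lemma sum_rademacher_mul_rademacher (k l : κ) :
    ∑ ε : κ → Bool, rademacher k ε * rademacher l ε =
      if k = l then 2 ^ Fintype.card κ else 0 := by
  split_ifs with hkl
  · subst hkl
    simp [rademacher_mul_self]
  -- flipping the `k`-th sign changes the sign of every summand
  have hflip : ∀ ε : κ → Bool, rademacher k (Function.update ε k (!ε k)) *
      rademacher l (Function.update ε k (!ε k)) = -(rademacher k ε * rademacher l ε) := by
    intro ε
    simp only [rademacher, Function.update_self, Function.update_of_ne (Ne.symm hkl)]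
    cases ε k <;> cases ε l <;> norm_num
  have hinv : Function.Involutive fun ε : κ → Bool => Function.update ε k (!ε k) := by
    intro ε; ext j; by_cases hj : j = k <;> simp [hj]
  have := Equiv.sum_comp hinv.toPerm fun ε => rademacher k ε * rademacher l ε
  simp only [Function.Involutive.coe_toPerm, hflip, sum_neg_distrib] at this
  linarith

lemma sum_sq_sum_rademacher_mul (y : κ → ℝ) :
    ∑ ε : κ → Bool, (∑ k, rademacher k ε * y k) ^ 2 = 2 ^ Fintype.card κ * ∑ k, y k ^ 2 := by
  calc ∑ ε : κ → Bool, (∑ k, rademacher k ε * y k) ^ 2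
      = ∑ k, ∑ l, (∑ ε : κ → Bool, rademacher k ε * rademacher l ε) * (y k * y l) := by
        simp_rw [sq, sum_mul_sum, sum_mul]
        rw [sum_comm]
        refine sum_congr rfl fun k _ => ?_
        rw [sum_comm]
        exact sum_congr rfl fun l _ => sum_congr rfl fun ε _ => by ring
    _ = 2 ^ Fintype.card κ * ∑ k, y k ^ 2 := by
        simp [sum_rademacher_mul_rademacher, mul_sum, sq]

lemma two_pow_mul_rpow_sum_sq_le {t : ℝ} (ht : 2 ≤ t) (y : κ → ℝ) :
    2 ^ Fintype.card κ * (∑ k, y k ^ 2) ^ (t / 2) ≤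
      ∑ ε : κ → Bool, |∑ k, rademacher k ε * y k| ^ t := by
  set N : ℝ := 2 ^ Fintype.card κ
  have hN : 0 < N := by positivity
  have hcard : ((univ : Finset (κ → Bool)).card : ℝ) = N := by
    simp [N]
  have hmean := Real.rpow_sum_le_const_mul_sum_rpow_of_nonneg (univ : Finset (κ → Bool))
    (f := fun ε => (∑ k, rademacher k ε * y k) ^ 2) (p := t / 2) (by linarith)
    (fun ε _ => sq_nonneg _)
  rw [sum_sq_sum_rademacher_mul, hcard, Real.mul_rpow hN.le (sum_nonneg fun k _ => sq_nonneg _),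
    Real.rpow_sub hN, Real.rpow_one, div_mul_eq_mul_div, le_div_iff₀ hN, mul_assoc,
    mul_le_mul_iff_right₀ (Real.rpow_pos_of_pos hN _)] at hmean
  simpa only [← sq_abs (∑ k, _), ← Real.rpow_natCast, ← Real.rpow_mul (abs_nonneg _),
    Nat.cast_ofNat, mul_div_cancel₀ t two_ne_zero, mul_comm N] using hmean

end Rademacher

/-- For the rows `g k` viewed in `ℓ_{q'}`, whose dual is `ℓ_q`, this says that their weak
`ℓ_q`-norm is at most one. -/
def IsLqContraction {ι κ : Type*} [Fintype ι] [Fintype κ] (q : ℝ) (g : κ → ι → ℝ) : Prop :=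
  ∀ a : ι → ℝ, ∑ k, |∑ i, a i * g k i| ^ q ≤ ∑ i, |a i| ^ q

namespace IsLqContraction

variable {ι κ : Type*} [Fintype ι] [Fintype κ] {q : ℝ} {g : κ → ι → ℝ}

lemma sum_abs_rpow_le_one (hg : IsLqContraction q g) (hq : q ≠ 0) (i : ι) :
    ∑ k, |g k i| ^ q ≤ 1 := by
  classical
  simpa [Pi.single_apply, apply_ite, Real.zero_rpow hq] using hg (Pi.single i 1)

lemma sum_sum_abs_rpow_le_card (hg : IsLqContraction q g) (hq : q ≠ 0) :
    ∑ k, ∑ i, |g k i| ^ q ≤ Fintype.card ι := by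
  calc ∑ k, ∑ i, |g k i| ^ q = ∑ i, ∑ k, |g k i| ^ q := sum_comm
    _ ≤ ∑ _i : ι, (1 : ℝ) := sum_le_sum fun i _ => hg.sum_abs_rpow_le_one hq i
    _ = Fintype.card ι := by simp

lemma abs_le_one (hg : IsLqContraction q g) (hq : 0 < q) (k : κ) (i : ι) : |g k i| ≤ 1 := by
  by_contra! h
  have := (single_le_sum (fun k _ => Real.rpow_nonneg (abs_nonneg (g k i)) q)
    (mem_univ k)).trans (hg.sum_abs_rpow_le_one hq.ne' i)
  exact (Real.one_lt_rpow h hq).not_ge this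

lemma sum_sq_le_one (hg : IsLqContraction 2 g) (k : κ) : ∑ i, g k i ^ 2 ≤ 1 := by
  set c := ∑ i, g k i ^ 2
  have hc : 0 ≤ c := sum_nonneg fun i _ => sq_nonneg _
  -- `c ^ 2 = ⟪g k, g k⟫ ^ 2` is one term of the left side of `hg (g k)`
  have : c ^ 2 ≤ c := calc
    c ^ 2 = |∑ i, g k i * g k i| ^ (2 : ℝ) := by simp [c, sq]
    _ ≤ ∑ l, |∑ i, g k i * g l i| ^ (2 : ℝ) :=
        single_le_sum (f := fun l => |∑ i, g k i * g l i| ^ (2 : ℝ))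
          (fun l _ => Real.rpow_nonneg (abs_nonneg _) _) (mem_univ k)
    _ ≤ ∑ i, |g k i| ^ (2 : ℝ) := hg (g k)
    _ = c := by simp [c]
  nlinarith

lemma sum_abs_sum_mul_rpow_le (hg : IsLqContraction q g) {t : ℝ} (ht : q.HolderConjugate t)
    (b : κ → ℝ) : ∑ i, |∑ k, b k * g k i| ^ t ≤ ∑ k, |b k| ^ t := by
  set Y := fun i => ∑ k, b k * g k i
  set T := ∑ i, |Y i| ^ t
  -- the vector `a` norming `Y` in the `ℓ_q / ℓ_t` duality
  set a := fun i => Y i * |Y i| ^ (t - 2)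
  have ht1 : 1 < t := ht.symm.lt
  have haY : ∀ i, a i * Y i = |Y i| ^ t := fun i => by
    rw [mul_right_comm, ← sq, ← sq_abs, ← Real.rpow_natCast, Nat.cast_ofNat,
      ← Real.rpow_add' (abs_nonneg _) (by linarith), add_sub_cancel]
  have ha : ∀ i, |a i| ^ q = |Y i| ^ t := fun i => by
    rw [abs_mul, Real.abs_rpow_of_nonneg (abs_nonneg _), abs_abs, mul_comm,
      ← Real.rpow_add_one' (abs_nonneg _) (by linarith), ← Real.rpow_mul (abs_nonneg _),
      show t - 2 + 1 = t - 1 by ring, ht.symm.sub_one_mul_conj]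
  have hT : T = ∑ k, b k * ∑ i, a i * g k i := by
    simp_rw [T, ← haY, Y, mul_sum]
    rw [sum_comm]
    exact sum_congr rfl fun k _ => sum_congr rfl fun i _ => by ring
  refine le_of_le_rpow_mul_rpow_one_sub (sum_nonneg fun i _ => Real.rpow_nonneg (abs_nonneg _) _)
    (sum_nonneg fun k _ => Real.rpow_nonneg (abs_nonneg _) _) (one_div_pos.2 ht.symm.pos) ?_
  calc T = ∑ k, b k * ∑ i, a i * g k i := hT
    _ ≤ (∑ k, |b k| ^ t) ^ (1 / t) * (∑ k, |∑ i, a i * g k i| ^ q) ^ (1 / q) :=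
        Real.inner_le_Lp_mul_Lq univ _ _ ht.symm
    _ ≤ (∑ k, |b k| ^ t) ^ (1 / t) * (∑ i, |a i| ^ q) ^ (1 / q) := by
        have := hg a
        gcongr
        exact ht.one_div_nonneg
    _ = (∑ k, |b k| ^ t) ^ (1 / t) * T ^ (1 - 1 / t) := by
        simp only [ha, one_div, ht.symm.one_sub_inv]
        rfl

lemma sum_rpow_sum_sq_le (hg : IsLqContraction q g) {t : ℝ} (ht : q.HolderConjugate t)
    (h2t : 2 ≤ t) (b : κ → ℝ) :
    ∑ i, (∑ k, (b k * g k i) ^ 2) ^ (t / 2) ≤ ∑ k, |b k| ^ t := by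
  classical
  refine le_of_mul_le_mul_left ?_ (by positivity : (0 : ℝ) < 2 ^ Fintype.card κ)
  calc 2 ^ Fintype.card κ * ∑ i, (∑ k, (b k * g k i) ^ 2) ^ (t / 2)
      ≤ ∑ i, ∑ ε : κ → Bool, |∑ k, rademacher k ε * (b k * g k i)| ^ t := by
        rw [mul_sum]
        exact sum_le_sum fun i _ => two_pow_mul_rpow_sum_sq_le h2t _
    _ = ∑ ε : κ → Bool, ∑ i, |∑ k, (rademacher k ε * b k) * g k i| ^ t := by
        rw [sum_comm]
        simp_rw [mul_assoc]
    _ ≤ ∑ ε : κ → Bool, ∑ k, |rademacher k ε * b k| ^ t :=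
        sum_le_sum fun ε _ => hg.sum_abs_sum_mul_rpow_le ht _
    _ = 2 ^ Fintype.card κ * ∑ k, |b k| ^ t := by
        simp [abs_mul, abs_rademacher]

lemma sum_rpow_sum_sq_le_card_of_holderConjugate (hg : IsLqContraction q g) {t : ℝ}
    (ht : q.HolderConjugate t) (h2t : 2 < t) :
    ∑ k, (∑ i, g k i ^ 2) ^ (t / (t - 2)) ≤ Fintype.card ι := by
  set c := fun k => ∑ i, g k i ^ 2
  set S := ∑ k, c k ^ (t / (t - 2))
  have hc : ∀ k, 0 ≤ c k := fun k => sum_nonneg fun i _ => sq_nonneg _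
  have ht2 : 0 < t - 2 := by linarith
  -- with the weights `b k = c k ^ (1 / (t - 2))` both sides of `sum_rpow_sum_sq_le` involve `S`
  set b := fun k => c k ^ (1 / (t - 2))
  have hbt : ∑ k, |b k| ^ t = S := sum_congr rfl fun k _ => by
    rw [abs_of_nonneg (Real.rpow_nonneg (hc k) _), ← Real.rpow_mul (hc k), one_div_mul_eq_div]
  have hV : ∑ i, ∑ k, (b k * g k i) ^ 2 = S := by
    rw [sum_comm]
    refine sum_congr rfl fun k _ => ?_
    simp_rw [mul_pow, ← mul_sum]
    rw [← Real.rpow_natCast, ← Real.rpow_mul (hc k), ← Real.rpow_add_one' (hc k) (by positivity)]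
    congr 1
    field_simp
    ring
  set V := fun i => ∑ k, (b k * g k i) ^ 2
  have hsq : ∑ i, V i ^ (t / 2) ≤ S := hbt ▸ hg.sum_rpow_sum_sq_le ht h2t.le b
  have hV0 : ∀ i, 0 ≤ V i := fun i => sum_nonneg fun k _ => sq_nonneg _
  have hS0 : 0 ≤ S := hV ▸ sum_nonneg fun i _ => hV0 i
  have hexp : 1 - (1 - 2 / t) = 2 / t := by ring
  have hα : 0 < 1 - 2 / t := by rw [sub_pos, div_lt_one (by linarith : (0 : ℝ) < t)]; exact h2t
  refine le_of_le_rpow_mul_rpow_one_sub hS0 (Nat.cast_nonneg _) hα ?_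
  calc S = ∑ i, (1 : ℝ) ^ (1 - 2 / t) * (V i ^ (t / 2)) ^ (1 - (1 - 2 / t)) := by
        rw [← hV]
        refine sum_congr rfl fun i _ => ?_
        rw [Real.one_rpow, one_mul, hexp, ← Real.rpow_mul (hV0 i),
          show t / 2 * (2 / t) = 1 by field_simp, Real.rpow_one]
    _ ≤ (∑ _i : ι, (1 : ℝ)) ^ (1 - 2 / t) * (∑ i, V i ^ (t / 2)) ^ (1 - (1 - 2 / t)) :=
        sum_rpow_mul_rpow_one_sub_le univ (fun _ _ => zero_le_one)
          (fun i _ => Real.rpow_nonneg (hV0 i) _) hα.le (sub_le_self _ (by positivity))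
    _ ≤ (Fintype.card ι : ℝ) ^ (1 - 2 / t) * S ^ (1 - (1 - 2 / t)) := by
        rw [hexp]
        simp only [sum_const, card_univ, nsmul_eq_mul, mul_one]
        gcongr

lemma sum_rpow_sum_sq_le_card (hg : IsLqContraction q g) (hq1 : 1 ≤ q) (hq2 : q < 2) :
    ∑ k, (∑ i, g k i ^ 2) ^ (q / (2 - q)) ≤ Fintype.card ι := by
  rcases hq1.eq_or_lt with rfl | hq1
  · -- for `q = 1` the entries lie in `[-1, 1]`, so `g k i ^ 2 ≤ |g k i|`
    calc ∑ k, (∑ i, g k i ^ 2) ^ ((1 : ℝ) / (2 - 1)) = ∑ k, ∑ i, g k i ^ 2 := by norm_num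
      _ ≤ ∑ k, ∑ i, |g k i| ^ (1 : ℝ) := by
          gcongr with k _ i _
          rw [Real.rpow_one, ← sq_abs, sq]
          exact mul_le_of_le_one_left (abs_nonneg _) (hg.abs_le_one one_pos k i)
      _ ≤ Fintype.card ι := hg.sum_sum_abs_rpow_le_card one_ne_zero
  · have ht := Real.HolderConjugate.conjExponent hq1
    have hexp : Real.conjExponent q / (Real.conjExponent q - 2) = q / (2 - q) := by
      rw [Real.conjExponent]
      field_simp
      ring
    rw [← hexp]
    exact hg.sum_rpow_sum_sq_le_card_of_holderConjugate ht (by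
      rw [Real.conjExponent, lt_div_iff₀ (by linarith)]; linarith)

theorem sum_rpow_sum_abs_rpow_le_card (hg : IsLqContraction q g) {θ r p : ℝ} (hθ0 : 0 ≤ θ)
    (hθ1 : θ < 1) (hq1 : 1 ≤ q) (hq2 : q ≤ 2) (hrθ : 1 / r = (1 - θ) / q + θ / 2)
    (hpθ : 1 / p = 1 / q - θ / 2) :
    ∑ k, (∑ i, |g k i| ^ r) ^ (p / r) ≤ Fintype.card ι := by
  have hq0 : 0 < q := by linarith
  have hp0 : 0 < p := pos_of_one_div_eq_sub hθ1 hq0 hq2 hpθ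
  rcases hq2.eq_or_lt with rfl | hq2
  · obtain rfl : r = 2 := by
      rw [← one_div_one_div r, hrθ]; ring
    have hp2 : 2 ≤ p := by
      rw [← one_div_one_div p, hpθ, le_div_iff₀ (by linarith)]; nlinarith
    calc ∑ k, (∑ i, |g k i| ^ (2 : ℝ)) ^ (p / 2) ≤ ∑ k, ∑ i, |g k i| ^ (2 : ℝ) := by
          gcongr with k _
          have hk : ∑ i, |g k i| ^ (2 : ℝ) ≤ 1 := by simpa using hg.sum_sq_le_one k
          simpa using Real.rpow_le_rpow_of_exponent_ge' (sum_nonneg fun i _ => by positivity) hk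
            zero_le_one (by linarith : 1 ≤ p / 2)
      _ ≤ Fintype.card ι := hg.sum_sum_abs_rpow_le_card two_ne_zero
  set e := (1 - θ) * p / q
  have hrow : ∀ k, (∑ i, |g k i| ^ r) ^ (p / r) ≤
      (∑ i, |g k i| ^ q) ^ e * ((∑ i, g k i ^ 2) ^ (q / (2 - q))) ^ (1 - e) := by
    intro k
    have hA : 0 ≤ ∑ i, |g k i| ^ q := sum_nonneg fun i _ => by positivity
    have hC : 0 ≤ ∑ i, g k i ^ 2 := sum_nonneg fun i _ => by positivity
    have hinterp := sum_abs_rpow_rpow_one_div_le (g k) hq0 two_pos hθ0 hθ1.le hrθ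
    simp only [Real.rpow_two, sq_abs] at hinterp
    calc (∑ i, |g k i| ^ r) ^ (p / r) = ((∑ i, |g k i| ^ r) ^ (1 / r)) ^ p := by
          rw [← Real.rpow_mul (sum_nonneg fun i _ => by positivity), one_div_mul_eq_div]
      _ ≤ ((∑ i, |g k i| ^ q) ^ ((1 - θ) / q) * (∑ i, g k i ^ 2) ^ (θ / 2)) ^ p := by
          gcongr
      _ = _ := by
          rw [Real.mul_rpow (by positivity) (by positivity), ← Real.rpow_mul hA,
            ← Real.rpow_mul hC, ← Real.rpow_mul hC]
          congr 2
          · ring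
          · have : q ≠ 2 := hq2.ne
            simp only [e]
            field_simp at hpθ ⊢
            linear_combination -hpθ
  have he0 : 0 ≤ e := by have := sub_pos.2 hθ1; positivity
  have he1 : e ≤ 1 := by
    simp only [e]
    rw [div_le_one hq0]
    field_simp at hpθ
    nlinarith [mul_nonneg (mul_nonneg hθ0 hp0.le) (sub_nonneg.2 hq2.le)]
  calc ∑ k, (∑ i, |g k i| ^ r) ^ (p / r)
      ≤ ∑ k, (∑ i, |g k i| ^ q) ^ e * ((∑ i, g k i ^ 2) ^ (q / (2 - q))) ^ (1 - e) :=
        sum_le_sum fun k _ => hrow k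
    _ ≤ Fintype.card ι :=
        sum_rpow_mul_rpow_one_sub_le_of_le univ (fun k _ => sum_nonneg fun i _ => by positivity)
          (fun k _ => by positivity) he0 he1 (hg.sum_sum_abs_rpow_le_card hq0.ne')
          (hg.sum_rpow_sum_sq_le_card hq1 hq2)

end IsLqContraction

lemma eSum_ofReal {ι : Type*} [Fintype ι] {p : ℝ} (hp : 0 < p) {f : ι → ℝ} (hf : ∀ i, 0 ≤ f i) :
    eSum (ENNReal.ofReal p) (fun i => ENNReal.ofReal (f i)) =
      ENNReal.ofReal ((∑ i, f i ^ p) ^ (1 / p)) := by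
  have hsum : 0 ≤ ∑ i, f i ^ p := sum_nonneg fun i _ => Real.rpow_nonneg (hf i) _
  rw [eSum, if_neg ENNReal.ofReal_ne_top, ENNReal.toReal_ofReal hp.le,
    ← ENNReal.ofReal_rpow_of_nonneg hsum (by positivity),
    ENNReal.ofReal_sum_of_nonneg fun i _ => Real.rpow_nonneg (hf i) _]
  simp_rw [ENNReal.ofReal_rpow_of_nonneg (hf _) hp.le]

lemma sum_abs_rpow_le_of_weakLq_le_one {X : Type*} [NormedAddCommGroup X] [NormedSpace ℝ X]
    {q : ℝ} (hq : 0 < q) {m : ℕ} {x : Fin m → X} (hx : weakLq (ENNReal.ofReal q) x ≤ 1)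
    (F : X →L[ℝ] ℝ) : ∑ k, |F (x k)| ^ q ≤ ‖F‖ ^ q := by
  have hunit : ∀ G : X →L[ℝ] ℝ, ‖G‖ ≤ 1 → ∑ k, |G (x k)| ^ q ≤ 1 := fun G hG => by
    have h := (le_iSup (fun G : {G : X →L[ℝ] ℝ // ‖G‖ ≤ 1} =>
      eSum (ENNReal.ofReal q) fun k => ENNReal.ofReal |G.1 (x k)|) ⟨G, hG⟩).trans hx
    rw [eSum_ofReal hq fun k => abs_nonneg _, ENNReal.ofReal_le_one] at h
    have h0 : 0 ≤ ∑ k, |G (x k)| ^ q := sum_nonneg fun k _ => by positivity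
    calc ∑ k, |G (x k)| ^ q = ((∑ k, |G (x k)| ^ q) ^ (1 / q)) ^ q := by
          rw [← Real.rpow_mul h0, one_div_mul_cancel hq.ne', Real.rpow_one]
      _ ≤ 1 := Real.rpow_le_one (by positivity) h hq.le
  rcases (norm_nonneg F).eq_or_lt with hF | hF
  · simp [norm_eq_zero.1 hF.symm, Real.zero_rpow hq.ne']
  have h := hunit (‖F‖⁻¹ • F) (by rw [norm_smul, norm_inv, norm_norm, inv_mul_cancel₀ hF.ne'])
  simp only [FunLike.coe_smul, Pi.smul_apply, smul_eq_mul, abs_mul, abs_inv, abs_norm,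
    Real.mul_rpow (inv_nonneg.2 hF.le) (abs_nonneg _), Real.inv_rpow hF.le, ← mul_sum] at h
  rwa [inv_mul_le_iff₀ (Real.rpow_pos_of_pos hF _), mul_one] at h

lemma holderConjugate_toReal {q : ℝ} {q' : ℝ≥0∞} (hq : 0 ≤ q)
    (hconj : 1 / ENNReal.ofReal q + 1 / q' = 1) (hq' : q' ≠ ∞) : q.HolderConjugate q'.toReal := by
  have hH : (ENNReal.ofReal q).HolderConjugate q' :=
    ENNReal.holderConjugate_iff.2 (by simpa only [one_div] using hconj)
  rw [ENNReal.ofReal, ← ENNReal.coe_toNNReal hq', ENNReal.holderConjugate_coe_iff] at hH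
  simpa [Real.coe_toNNReal _ hq, ENNReal.coe_toNNReal_eq_toReal] using
    NNReal.holderConjugate_coe_iff.2 hH

section Pairing

variable {ι : Type*} [Fintype ι] (q' : ℝ≥0∞)

def dotCLM (a : ι → ℝ) : PiLp q' (fun _ : ι => ℝ) →L[ℝ] ℝ :=
  ∑ i, a i • PiLp.proj q' (𝕜 := ℝ) (fun _ : ι => ℝ) i

lemma dotCLM_apply (a : ι → ℝ) (z : PiLp q' (fun _ : ι => ℝ)) :
    dotCLM q' a z = ∑ i, a i * z i := by
  simp [dotCLM]

lemma norm_dotCLM_le [Fact (1 ≤ q')] {q : ℝ} (hq : 1 ≤ q)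
    (hconj : 1 / ENNReal.ofReal q + 1 / q' = 1) (a : ι → ℝ) :
    ‖dotCLM q' a‖ ≤ (∑ i, |a i| ^ q) ^ (1 / q) := by
  refine ContinuousLinearMap.opNorm_le_bound _ (by positivity) fun z => ?_
  rw [dotCLM_apply]
  refine (abs_sum_le_sum_abs _ _).trans ?_
  simp_rw [abs_mul]
  by_cases hq' : q' = ∞
  · subst hq'
    obtain rfl : q = 1 := by simpa using hconj
    simp only [Real.rpow_one, div_one, sum_mul]
    exact sum_le_sum fun i _ => mul_le_mul_of_nonneg_left (PiLp.norm_apply_le z i) (abs_nonneg _)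
  · have hH := holderConjugate_toReal (by linarith) hconj hq'
    rw [PiLp.norm_eq_sum (ENNReal.toReal_pos (zero_lt_one.trans_le Fact.out).ne' hq')]
    exact Real.inner_le_Lp_mul_Lq_of_nonneg univ hH (fun i _ => abs_nonneg _)
      (fun i _ => abs_nonneg _)

end Pairing

lemma isLqContraction_of_weakLq_le_one {ι : Type*} [Fintype ι] {q : ℝ} {q' : ℝ≥0∞}
    [Fact (1 ≤ q')] (hq : 1 ≤ q) (hconj : 1 / ENNReal.ofReal q + 1 / q' = 1) {m : ℕ}
    {x : Fin m → PiLp q' (fun _ : ι => ℝ)} (hx : weakLq (ENNReal.ofReal q) x ≤ 1) :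
    IsLqContraction q fun k i => x k i := fun a => by
  have hq0 : 0 < q := by linarith
  calc ∑ k, |∑ i, a i * x k i| ^ q = ∑ k, |dotCLM q' a (x k)| ^ q := by simp [dotCLM_apply]
    _ ≤ ‖dotCLM q' a‖ ^ q := sum_abs_rpow_le_of_weakLq_le_one hq0 hx _
    _ ≤ ((∑ i, |a i| ^ q) ^ (1 / q)) ^ q := by gcongr; exact norm_dotCLM_le q' hq hconj a
    _ = ∑ i, |a i| ^ q := by
        rw [← Real.rpow_mul (sum_nonneg fun i _ => by positivity), one_div_mul_cancel hq0.ne',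
          Real.rpow_one]

theorem statement15_general (θ q r p : ℝ) (q' : ℝ≥0∞) (hθ0 : 0 < θ) (hθ1 : θ < 1)
    (hq1 : 1 ≤ q) (hq2 : q ≤ 2) (hr1 : 1 ≤ r)
    (hconj : 1 / ENNReal.ofReal q + 1 / q' = 1) (hq' : 1 ≤ q')
    (hrθ : 1 / r = (1 - θ) / q + θ / 2) (hpθ : 1 / p = 1 / q - θ / 2)
    (n : ℕ) :
    haveI : Fact (1 ≤ q') := ⟨hq'⟩
    haveI : Fact (1 ≤ ENNReal.ofReal r) := ⟨ENNReal.one_le_ofReal.mpr hr1⟩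
    ∀ ι : PiLp q' (fun _ : Fin n => ℝ) →L[ℝ] PiLp (ENNReal.ofReal r) (fun _ : Fin n => ℝ),
      (∀ (x : PiLp q' (fun _ : Fin n => ℝ)) (i : Fin n), ι x i = x i) →
      piPQ (ENNReal.ofReal p) (ENNReal.ofReal q) ι ≤ (n : ℝ≥0∞) ^ (1 / p) := by
  intro ι hι
  have : Fact (1 ≤ q') := ⟨hq'⟩
  have : Fact (1 ≤ ENNReal.ofReal r) := ⟨ENNReal.one_le_ofReal.mpr hr1⟩
  have hr0 : 0 < r := by linarith
  have hp0 : 0 < p := pos_of_one_div_eq_sub hθ1 (by linarith) hq2 hpθ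
  refine iSup_le fun m => iSup_le fun ⟨x, hx⟩ => ?_
  have hsum := (isLqContraction_of_weakLq_le_one hq1 hconj hx).sum_rpow_sum_abs_rpow_le_card
    hθ0.le hθ1 hq1 hq2 hrθ hpθ
  have hnorm : ∀ k, ‖ι (x k)‖ ^ p = (∑ i, |x k i| ^ r) ^ (p / r) := fun k => by
    rw [PiLp.norm_eq_sum (by rwa [ENNReal.toReal_ofReal hr0.le]), ENNReal.toReal_ofReal hr0.le,
      ← Real.rpow_mul (sum_nonneg fun i _ => by positivity), one_div_mul_eq_div]
    simp [hι]
  dsimp only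
  rw [eSum_ofReal hp0 fun k => norm_nonneg _, ← ENNReal.ofReal_natCast,
    ENNReal.ofReal_rpow_of_nonneg (Nat.cast_nonneg n) (by positivity)]
  gcongr
  simpa [hnorm] using hsum

/-- for `0 < θ < 1`, `1 ≤ q ≤ 2`, `1 ≤ r ≤ 2` with
`1/r = (1-θ)/q + θ/2` and `1/p = 1/q - θ/2` (`p ≥ q`), the canonical identity
`ι : ℓ_{q'}^n → ℓ_r^n` satisfies `π_{p,q}(ι) ≤ n^{1/p}`. -/
theorem statement15 (θ q r p : ℝ) (q' : ℝ≥0∞) (hθ0 : 0 < θ) (hθ1 : θ < 1)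
    (hq1 : 1 ≤ q) (hq2 : q ≤ 2) (hr1 : 1 ≤ r) (hr2 : r ≤ 2)
    (hconj : 1 / ENNReal.ofReal q + 1 / q' = 1) (hq' : 1 ≤ q')
    (hrθ : 1 / r = (1 - θ) / q + θ / 2) (hpθ : 1 / p = 1 / q - θ / 2)
    (hqp : q ≤ p) (n : ℕ) :
    haveI : Fact (1 ≤ q') := ⟨hq'⟩
    haveI : Fact (1 ≤ ENNReal.ofReal r) := ⟨ENNReal.one_le_ofReal.mpr hr1⟩
    ∀ ι : PiLp q' (fun _ : Fin n => ℝ) →L[ℝ] PiLp (ENNReal.ofReal r) (fun _ : Fin n => ℝ),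
      (∀ (x : PiLp q' (fun _ : Fin n => ℝ)) (i : Fin n), ι x i = x i) →
      piPQ (ENNReal.ofReal p) (ENNReal.ofReal q) ι ≤ (n : ℝ≥0∞) ^ (1 / p) :=
  statement15_general θ q r p q' hθ0 hθ1 hq1 hq2 hr1 hconj hq' hrθ hpθ n
end
end
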